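/- Let n > 1 be a composite integer. Then Γ̃(ℤ/nℤ) = Z*(Γ(ℤ/nℤ)) (i.e., for all distinct nonzero zero-divisors x, y with xy = 0, one has x + y a zero-divisor) if and only if n is a power of a prime. -/

import Mathlib

def ZDStar {R : Type*} [CommRing R] (x : R) : Prop := x ≠ 0 ∧ ∃ y ≠ 0, x * y = 0

/-!
Zero-divisors of `ℤ/p^kℤ` are exactly the multiples of `p`, i.e. the non-units of a local ring,
and non-units of a local ring are closed under addition. If `n` is not a prime power, the
Chinese remainder theorem splits `ℤ/nℤ` as a product, and the idempotents `e = (1, 0)` and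
`1 - e = (0, 1)` are distinct zero-divisors with `e (1 - e) = 0` whose sum `1` is a unit.
-/

/-- The condition `Γ̃(R) = Z*(Γ(R))`. -/
def AnnihilatingSumsZeroDivisor (R : Type*) [CommRing R] : Prop :=
  ∀ x y : R, ZDStar x → ZDStar y → x ≠ y → x * y = 0 → ∃ z ≠ 0, (x + y) * z = 0

section CommRing

variable {R : Type*} [CommRing R]

theorem ZDStar.not_isUnit {x : R} (hx : ZDStar x) : ¬IsUnit x := by
  obtain ⟨-, y, hy, hxy⟩ := hx
  exact fun hu => hy ((hu.mul_right_eq_zero).mp hxy)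

theorem exists_ne_zero_mul_eq_zero_of_not_isUnit [Finite R] {a : R} (ha : ¬IsUnit a) :
    ∃ z ≠ 0, a * z = 0 := by
  have hreg : ¬IsLeftRegular a := fun h => ha h.isUnit_of_finite
  rw [isLeftRegular_iff_right_eq_zero_of_mul] at hreg
  push Not at hreg
  obtain ⟨z, hz, hz₀⟩ := hreg
  exact ⟨z, hz₀, hz⟩

theorem IsLocalRing.annihilatingSumsZeroDivisor [IsLocalRing R] [Finite R] :
    AnnihilatingSumsZeroDivisor R := fun _ _ hx hy _ _ =>
  exists_ne_zero_mul_eq_zero_of_not_isUnit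
    (IsLocalRing.nonunits_add hx.not_isUnit hy.not_isUnit)

theorem IsIdempotentElem.not_annihilatingSumsZeroDivisor {e : R} (he : IsIdempotentElem e)
    (he₀ : e ≠ 0) (he₁ : e ≠ 1) : ¬AnnihilatingSumsZeroDivisor R := by
  intro h
  have hcompl₀ : 1 - e ≠ 0 := sub_ne_zero.mpr he₁.symm
  have hmul : e * (1 - e) = 0 := by rw [mul_sub, mul_one, he.eq, sub_self]
  have hne : e ≠ 1 - e := fun heq => he₀ <|
    calc e = e * e := he.eq.symm
      _ = e * (1 - e) := by nth_rw 2 [heq]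
      _ = 0 := hmul
  obtain ⟨z, hz, hz₀⟩ := h e (1 - e) ⟨he₀, 1 - e, hcompl₀, hmul⟩
    ⟨hcompl₀, e, he₀, by rw [mul_comm, hmul]⟩ hne hmul
  rw [add_sub_cancel, one_mul] at hz₀
  exact hz hz₀

end CommRing

theorem Nat.exists_coprime_mul_eq_of_ne_prime_pow {n : ℕ} (hn : n ≠ 0)
    (h : ∀ p k : ℕ, p.Prime → n ≠ p ^ k) :
    ∃ a b : ℕ, 1 < a ∧ 1 < b ∧ a.Coprime b ∧ a * b = n := by
  obtain ⟨p, hp, hpn⟩ := Nat.exists_prime_and_dvd (h 2 0 Nat.prime_two)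
  refine ⟨p ^ n.factorization p, n / p ^ n.factorization p, ?_, ?_,
    Nat.Coprime.pow_left _ (Nat.coprime_ordCompl hp hn), Nat.ordProj_mul_ordCompl_eq_self n p⟩
  · exact Nat.one_lt_pow (hp.factorization_pos_of_dvd hn hpn).ne' hp.one_lt
  · have hpos : 0 < n / p ^ n.factorization p := Nat.ordCompl_pos p hn
    have hne : n / p ^ n.factorization p ≠ 1 := fun h1 =>
      h p _ hp (by simpa [h1] using (Nat.ordProj_mul_ordCompl_eq_self n p).symm)
    omega

namespace ZMod

theorem exists_isIdempotentElem_ne_zero_ne_one {a b : ℕ} (ha : 1 < a) (hb : 1 < b)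
    (hab : a.Coprime b) : ∃ e : ZMod (a * b), IsIdempotentElem e ∧ e ≠ 0 ∧ e ≠ 1 := by
  have : Fact (1 < a) := ⟨ha⟩
  have : Fact (1 < b) := ⟨hb⟩
  let f := (chineseRemainder hab).symm
  have hidem : IsIdempotentElem ((1, 0) : ZMod a × ZMod b) := by simp [IsIdempotentElem]
  refine ⟨f (1, 0), hidem.map f, ?_, ?_⟩
  · rw [← map_zero f, f.injective.ne_iff]
    simp [Prod.ext_iff]
  · rw [← map_one f, f.injective.ne_iff]
    simp [Prod.ext_iff]

theorem isUnit_iff_not_dvd_val {p k : ℕ} [NeZero (p ^ k)] (hp : p.Prime) (hk : k ≠ 0)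
    (x : ZMod (p ^ k)) : IsUnit x ↔ ¬p ∣ x.val := by
  rw [← natCast_zmod_val x, isUnit_iff_coprime, val_natCast_of_lt (val_lt x),
    Nat.coprime_pow_right_iff (Nat.pos_of_ne_zero hk), Nat.coprime_comm,
    hp.coprime_iff_not_dvd]

theorem isLocalRing_prime_pow {p k : ℕ} [NeZero (p ^ k)] (hp : p.Prime) (hk : k ≠ 0) :
    IsLocalRing (ZMod (p ^ k)) := by
  have : Fact (1 < p ^ k) := ⟨Nat.one_lt_pow hk hp.one_lt⟩
  refine IsLocalRing.of_nonunits_add fun x y hx hy => ?_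
  simp only [mem_nonunits_iff, isUnit_iff_not_dvd_val hp hk, not_not] at hx hy ⊢
  rw [val_add, Nat.dvd_mod_iff (dvd_pow_self p hk)]
  exact dvd_add hx hy

end ZMod

theorem stmt19_general (n : ℕ) (hn : 1 < n) :
    (∀ x y : ZMod n, ZDStar x → ZDStar y → x ≠ y → x * y = 0 →
      ∃ z ≠ 0, (x + y) * z = 0) ↔
    ∃ (p k : ℕ), p.Prime ∧ n = p ^ k := by
  refine ⟨fun h => ?_, ?_⟩
  · by_contra hpow
    push Not at hpow
    obtain ⟨a, b, ha, hb, hab, rfl⟩ :=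
      Nat.exists_coprime_mul_eq_of_ne_prime_pow (by omega) hpow
    obtain ⟨e, he, he₀, he₁⟩ := ZMod.exists_isIdempotentElem_ne_zero_ne_one ha hb hab
    exact he.not_annihilatingSumsZeroDivisor he₀ he₁ h
  · rintro ⟨p, k, hp, rfl⟩
    have hk : k ≠ 0 := by rintro rfl; simp at hn
    have : NeZero (p ^ k) := ⟨by omega⟩
    have := ZMod.isLocalRing_prime_pow hp hk
    exact IsLocalRing.annihilatingSumsZeroDivisor

theorem stmt19 (n : ℕ) (hn : 1 < n) (hcomp : ¬ n.Prime) :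
    (∀ x y : ZMod n, ZDStar x → ZDStar y → x ≠ y → x * y = 0 →
      ∃ z ≠ 0, (x + y) * z = 0) ↔
    ∃ (p k : ℕ), p.Prime ∧ n = p ^ k :=
  stmt19_general n hn
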